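/- The operator C is a finitary (finite) consequence operator: for all X ⊆ L, X ⊆ C(X), C(C(X)) = C(X), and C(X) = ⋃ {C(Z) | Z ⊆ X, Z finite}. -/
import Mathlib


theorem stmt {L : Type*} (n : ℕ) (hn : 1 ≤ n) (a d b : Fin n → L)
    (hab : ∀ i k, a i ≠ b k) (hdb : ∀ i k, d i ≠ b k)
    (D : Fin n → Set L) (hD : ∀ i, D i = {a i, d i})
    (C : Set L → Set L)
    (hC : ∀ X, C X = X ∪ {y | ∃ i, D i ⊆ X ∧ y = b i}) :
    ∀ X : Set L, X ⊆ C X ∧ C (C X) = C X ∧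
      C X = ⋃ Z ∈ {Z : Set L | Z ⊆ X ∧ Z.Finite}, C Z := by
  -- key: if D i ⊆ C X then D i ⊆ X
  have key : ∀ X : Set L, ∀ i, D i ⊆ C X → D i ⊆ X := by
    intro X i h y hy
    have := h hy
    rw [hC] at this
    rcases this with h' | ⟨k, _, hk⟩
    · exact h'
    · exfalso
      rw [hD] at hy
      rcases hy with rfl | rfl
      · exact hab i k hk
      · exact hdb i k hk
  have hsub : ∀ X : Set L, X ⊆ C X := by
    intro X y hy; rw [hC]; exact Or.inl hy
  have hmono : ∀ X Y : Set L, X ⊆ Y → C X ⊆ C Y := by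
    intro X Y hXY y hy
    rw [hC] at hy ⊢
    rcases hy with h | ⟨i, hi, rfl⟩
    · exact Or.inl (hXY h)
    · exact Or.inr ⟨i, hi.trans hXY, rfl⟩
  intro X
  refine ⟨hsub X, ?_, ?_⟩
  · apply Set.Subset.antisymm _ (hsub _)
    intro y hy
    rw [hC] at hy
    rcases hy with h | ⟨i, hi, rfl⟩
    · exact h
    · rw [hC]; exact Or.inr ⟨i, key X i hi, rfl⟩
  · apply Set.Subset.antisymm
    · intro y hy
      rw [hC] at hy
      rcases hy with h | ⟨i, hi, rfl⟩
      · exact Set.mem_iUnion₂.mpr ⟨{y}, ⟨Set.singleton_subset_iff.mpr h,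
          Set.finite_singleton y⟩, hsub _ rfl⟩
      · refine Set.mem_iUnion₂.mpr ⟨D i, ⟨hi, ?_⟩, ?_⟩
        · rw [hD]; exact (Set.finite_singleton _).insert _
        · rw [hC]; exact Or.inr ⟨i, le_refl _, rfl⟩
    · intro y hy
      rcases Set.mem_iUnion₂.mp hy with ⟨Z, ⟨hZX, _⟩, hyZ⟩
      exact hmono Z X hZX hyZ
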